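/- arXiv:1801.07003 — 4 statements merged into one kernel-verified Lean document; each statement's English description precedes it below -/
import Mathlib

section
/- Let F_{s₀} ⊊ F_{s₁} ⊊ ... ⊊ F_{s_ℓ} = F_q be a chain of subfields, let k < n ≤ s₀, let α₁,...,αₙ be distinct elements of F_{s₀}, and let η_i ∈ F_{s_i} \ F_{s_{i−1}} for i = 1,...,ℓ. Then the twisted Reed–Solomon code C^{n,k}(α,t,h,η) is MDS, i.e., its minimum distance equals n − k + 1. -/
open Polynomial

noncomputable def evalVec {F : Type*} [Field F] {n : ℕ} (α : Fin n → F) :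
    F[X] →ₗ[F] (Fin n → F) :=
  LinearMap.pi fun i => Polynomial.leval (α i)

/-- The set of (t,h,η)-twisted polynomials: all `∑_{i<k} f_i Xⁱ + ∑_j η_j f_{h_j} X^{k-1+t_j}`. -/
noncomputable def twistedSet {F : Type*} [Field F] (k ℓ : ℕ) (t h : Fin ℓ → ℕ)
    (η : Fin ℓ → F) : Set F[X] :=
  { g | ∃ f : ℕ → F,
      g = (∑ i ∈ Finset.range k, Polynomial.C (f i) * X ^ i)
        + ∑ j : Fin ℓ, Polynomial.C (η j * f (h j)) * X ^ (k - 1 + t j) }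

/-- The twisted Reed–Solomon code: evaluation of the twisted polynomials at `α`. -/
noncomputable def twistedCode {F : Type*} [Field F] (n k ℓ : ℕ) (α : Fin n → F)
    (t h : Fin ℓ → ℕ) (η : Fin ℓ → F) : Submodule F (Fin n → F) :=
  Submodule.span F (evalVec α '' twistedSet k ℓ t h η)

/-- Hamming weight of a vector. -/
noncomputable def wt {F : Type*} [Zero F] {n : ℕ} (x : Fin n → F) : ℕ :=
  Nat.card {i // x i ≠ 0}

/-!
Let `g` be a twisted polynomial vanishing at `k` of the evaluation points and let `q ∈ K₀[X]` be
the monic polynomial with these roots. Reducing `g` modulo `q` shows that the hooked coefficients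
`c_j = f_{h_j}` satisfy `(1 + B · diag η) c = 0` for a matrix `B` over `K₀`. The determinant of
this system is affine in the last twist coefficient `η_ℓ`, with coefficients in `K_{ℓ-1} ∌ η_ℓ`, so
it is nonzero by induction along the chain of subfields. Hence `c = 0`, `g` has degree `< k`, and
`g = 0`: a nonzero codeword has fewer than `k` zeros. As the code has dimension `k`, a codeword
vanishing on `k - 1` prescribed coordinates attains the Singleton bound.
-/

open Finset Module Matrix

namespace Matrix

theorem det_mem_of_forall_mem {n R σ : Type*} [Fintype n] [DecidableEq n] [CommRing R]
    [SetLike σ R] [SubringClass σ R] (S : σ) (M : Matrix n n R) (hM : ∀ i j, M i j ∈ S) :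
    M.det ∈ S := by
  rw [det_apply]
  exact sum_mem fun σ _ => by
    rw [Units.smul_def]
    exact zsmul_mem (prod_mem fun i _ => hM _ _) _

theorem det_updateCol_last_single_one {m : ℕ} {R : Type*} [CommRing R]
    (M : Matrix (Fin (m + 1)) (Fin (m + 1)) R) :
    (M.updateCol (Fin.last m) (Pi.single (Fin.last m) 1)).det =
      (M.submatrix Fin.castSucc Fin.castSucc).det := by
  rw [det_succ_column _ (Fin.last m), Fintype.sum_eq_single (Fin.last m)]
  · simp [submatrix, updateCol_ne, Fin.castSucc_ne_last]
  · intro i hi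
    simp [hi]

variable {F : Type*} [Field F]

theorem det_updateCol_add_smul_ne_zero {n : Type*} [Fintype n] [DecidableEq n]
    {S : Subfield F} {M : Matrix n n F} {j : n} {u v : n → F} {a : F}
    (hM : ∀ p q, q ≠ j → M p q ∈ S) (hu : ∀ p, u p ∈ S) (hv : ∀ p, v p ∈ S) (ha : a ∉ S)
    (h : (M.updateCol j u).det ≠ 0) : (M.updateCol j (u + a • v)).det ≠ 0 := by
  have hmem : ∀ w : n → F, (∀ p, w p ∈ S) → (M.updateCol j w).det ∈ S := fun w hw =>
    det_mem_of_forall_mem S _ fun p q => by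
      by_cases hq : q = j
      · subst hq; simpa using hw p
      · simpa [updateCol_ne hq] using hM p q hq
  rw [det_updateCol_add, det_updateCol_smul]
  intro h0
  by_cases hv0 : (M.updateCol j v).det = 0
  · exact h (by simpa [hv0] using h0)
  · refine ha ?_
    have : a = -(M.updateCol j u).det / (M.updateCol j v).det := by
      field_simp; linear_combination h0
    exact this ▸ S.div_mem (S.neg_mem (hmem u hu)) (hmem v hv)

theorem det_one_add_mul_diagonal_ne_zero {ℓ : ℕ} (K : Fin (ℓ + 1) → Subfield F)
    (hK : Monotone K) (A : Matrix (Fin ℓ) (Fin ℓ) F) (hA : ∀ i j, A i j ∈ K 0) (η : Fin ℓ → F)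
    (hη : ∀ j : Fin ℓ, η j ∈ K j.succ ∧ η j ∉ K j.castSucc) :
    (1 + A * diagonal η).det ≠ 0 := by
  induction ℓ with
  | zero => simp
  | succ m ih =>
    set L := Fin.last m
    set M := 1 + A * diagonal η
    -- only the last column involves `η L`, the one entry outside `K L.castSucc`
    have hcol : M = M.updateCol L (Pi.single L 1 + η L • fun p => A p L) := by
      ext p q
      by_cases hq : q = L
      · subst hq; simp [M, one_apply, Pi.single_apply, mul_comm]
      · simp [M, updateCol_ne hq]
    have hKL : ∀ i, K 0 ≤ K i := fun i => hK (Fin.zero_le i)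
    have hsub : M.submatrix Fin.castSucc Fin.castSucc =
        1 + A.submatrix Fin.castSucc Fin.castSucc * diagonal (η ∘ Fin.castSucc) := by
      ext p q; simp [M, one_apply]
    rw [hcol]
    refine det_updateCol_add_smul_ne_zero (S := K L.castSucc) (fun p q hq => ?_)
      (fun p => ?_) (fun p => hKL _ (hA p L)) (hη L).2 ?_
    · have hq' : q.succ ≤ L.castSucc := Fin.succ_le_castSucc_iff.2 (Fin.lt_last_iff_ne_last.2 hq)
      simp only [M, add_apply, mul_diagonal, one_apply]
      refine add_mem ?_ (mul_mem (hKL _ (hA p q)) (hK hq' (hη q).1))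
      split_ifs <;> simp [one_mem, zero_mem]
    · rw [Pi.single_apply]; split_ifs <;> simp [one_mem, zero_mem]
    · rw [det_updateCol_last_single_one, hsub]
      exact ih (K ∘ Fin.castSucc) (fun _ _ hpq => hK (Fin.castSucc_le_castSucc_iff.2 hpq)) _
        (fun i j => hA _ _) _ fun j => by simpa using hη j.castSucc

end Matrix

theorem Polynomial.coeff_add_sum_mul_coeff_modByMonic_eq_zero {R ι : Type*} [CommRing R]
    [Nontrivial R] [Fintype ι] {k : ℕ} {q : R[X]} (hq : q.Monic) (hqk : q.natDegree = k)
    (a : ℕ → R) (d : ι → R) (e : ι → ℕ)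
    (hdvd : q ∣ (∑ i ∈ range k, C (a i) * X ^ i) + ∑ j, C (d j) * X ^ e j) :
    ∀ i < k, a i + ∑ j, d j * (X ^ e j %ₘ q).coeff i = 0 := by
  have hlow : (∑ i ∈ range k, C (a i) * X ^ i) %ₘ q = ∑ i ∈ range k, C (a i) * X ^ i := by
    rw [modByMonic_eq_self_iff hq, degree_eq_natDegree hq.ne_zero, hqk,
      ← Fin.sum_univ_eq_sum_range fun i => C (a i) * X ^ i]
    exact degree_sum_fin_lt _
  have h0 := (modByMonic_eq_zero_iff_dvd hq).2 hdvd
  rw [← modByMonicHom_apply, map_add, modByMonicHom_apply, hlow, map_sum] at h0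
  simp only [← smul_eq_C_mul, map_smul, modByMonicHom_apply] at h0
  intro i hi
  simpa [finsetSum_coeff, coeff_C_mul_X_pow, hi] using congrArg (coeff · i) h0

section Coding

variable {F : Type*} [Field F] {n k : ℕ}

theorem wt_add_card_filter_eq_zero [DecidableEq F] (c : Fin n → F) :
    wt c + #{i | c i = 0} = n := by
  rw [wt, Nat.card_eq_fintype_card, Fintype.card_subtype, add_comm,
    card_filter_add_card_filter_not, card_univ, Fintype.card_fin]

theorem sub_add_one_le_wt {C : Submodule F (Fin n → F)}
    (hzero : ∀ c ∈ C, ∀ Z : Finset (Fin n), k ≤ #Z → (∀ i ∈ Z, c i = 0) → c = 0)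
    {c : Fin n → F} (hc : c ∈ C) (hc0 : c ≠ 0) : n - k + 1 ≤ wt c := by
  classical
  obtain ⟨i, hi⟩ := Function.ne_iff.1 hc0
  have hpos : 0 < wt c := @Nat.card_pos _ ⟨⟨i, hi⟩⟩ _
  have hzeros := mt (hzero c hc {i | c i = 0}) (by simpa using hc0)
  have := wt_add_card_filter_eq_zero c
  omega

theorem exists_wt_eq_sub_add_one {C : Submodule F (Fin n → F)}
    (hzero : ∀ c ∈ C, ∀ Z : Finset (Fin n), k ≤ #Z → (∀ i ∈ Z, c i = 0) → c = 0)
    (hk : 0 < k) (hdim : k ≤ finrank F C) :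
    ∃ c ∈ C, c ≠ 0 ∧ wt c = n - k + 1 := by
  classical
  have hkn : k ≤ n := hdim.trans (by simpa using C.finrank_le)
  obtain ⟨Z, -, hZ⟩ := exists_subset_card_eq (s := (univ : Finset (Fin n))) (n := k - 1)
    (by simp; omega)
  let ρ := LinearMap.funLeft F F (Subtype.val : Z → Fin n) ∘ₗ C.subtype
  have hker : LinearMap.ker ρ ≠ ⊥ :=
    LinearMap.ker_ne_bot_of_finrank_lt (by simp [hZ]; omega)
  obtain ⟨⟨c, hc⟩, hcρ, hne⟩ := Submodule.exists_mem_ne_zero_of_ne_bot hker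
  have hc0 : c ≠ 0 := fun h => hne (Subtype.ext h)
  have hZzero : Z ⊆ ({i | c i = 0} : Finset (Fin n)) := fun i hi => by
    simpa [ρ] using congrFun (LinearMap.mem_ker.1 hcρ) ⟨i, hi⟩
  have hlower := card_le_card hZzero
  have hupper := mt (hzero c hc {i | c i = 0}) (by simpa using hc0)
  have := wt_add_card_filter_eq_zero c
  exact ⟨c, hc, hc0, by omega⟩

end Coding

section Twisted

variable {F : Type*} [Field F] {n k ℓ : ℕ} {t h : Fin ℓ → ℕ} {η : Fin ℓ → F}

noncomputable def twistedMap (k : ℕ) (t h : Fin ℓ → ℕ) (η : Fin ℓ → F) : (ℕ → F) →ₗ[F] F[X] where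
  toFun f := (∑ i ∈ range k, C (f i) * X ^ i) + ∑ j, C (η j * f (h j)) * X ^ (k - 1 + t j)
  map_add' f g := by
    simp only [Pi.add_apply, mul_add, C_add, add_mul, sum_add_distrib]
    ring
  map_smul' c f := by
    simp only [Pi.smul_apply, smul_eq_mul, mul_left_comm (η _), C_mul, mul_assoc, ← mul_sum,
      RingHom.id_apply, smul_eq_C_mul, mul_add]

theorem range_twistedMap : Set.range (twistedMap k t h η) = twistedSet k ℓ t h η :=
  Set.ext fun _ => exists_congr fun _ => eq_comm

theorem twistedCode_eq_range {α : Fin n → F} :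
    twistedCode n k ℓ α t h η = LinearMap.range (evalVec α ∘ₗ twistedMap k t h η) := by
  rw [twistedCode, ← range_twistedMap, ← Set.range_comp, ← LinearMap.coe_comp,
    ← LinearMap.coe_range, Submodule.span_eq]

theorem twistedMap_eq_zero (hh : ∀ j, h j < k) {f : ℕ → F} (hf : ∀ i < k, f i = 0) :
    twistedMap k t h η f = 0 := by
  have hlow : ∑ i ∈ range k, C (f i) * X ^ i = 0 :=
    sum_eq_zero fun i hi => by rw [hf i (mem_range.1 hi), C_0, zero_mul]
  simp [twistedMap, hf, hh, hlow]

theorem forall_lt_eq_zero_of_map_dvd_twistedMap (K : Fin (ℓ + 1) → Subfield F) (hK : Monotone K)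
    (hη : ∀ j : Fin ℓ, η j ∈ K j.succ ∧ η j ∉ K j.castSucc) (hh : ∀ j, h j < k) {f : ℕ → F}
    {q : (K 0)[X]} (hq : q.Monic) (hqk : q.natDegree = k)
    (hdvd : q.map (K 0).subtype ∣ twistedMap k t h η f) : ∀ i < k, f i = 0 := by
  have hrel := coeff_add_sum_mul_coeff_modByMonic_eq_zero (hq.map _)
    ((hq.natDegree_map _).trans hqk) f (fun j => η j * f (h j)) (fun j => k - 1 + t j) hdvd
  have hcoeff : ∀ e i, (X ^ e %ₘ q.map (K 0).subtype).coeff i = ((X ^ e %ₘ q).coeff i : F) := by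
    intro e i
    rw [← Polynomial.map_X (K 0).subtype, ← Polynomial.map_pow, ← map_modByMonic _ hq, coeff_map]
    rfl
  -- reducing modulo `q`, whose coefficients lie in `K 0`, yields a linear system for `f ∘ h`
  let B : Matrix (Fin ℓ) (Fin ℓ) F := fun j j' => (X ^ (k - 1 + t j') %ₘ q).coeff (h j)
  have hB : (1 + B * diagonal η) *ᵥ (f ∘ h) = 0 := by
    funext j
    rw [add_mulVec, one_mulVec, ← mulVec_mulVec]
    simpa [B, mulVec, dotProduct, diagonal_apply, hcoeff, mul_comm, mul_left_comm]
      using hrel _ (hh j)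
  have hfh : f ∘ h = 0 := eq_zero_of_mulVec_eq_zero
    (det_one_add_mul_diagonal_ne_zero K hK B (fun _ _ => Subtype.property _) η hη) hB
  intro i hi
  simpa [show ∀ j, f (h j) = 0 from congrFun hfh] using hrel i hi

theorem forall_lt_eq_zero_of_eval_eq_zero (K : Fin (ℓ + 1) → Subfield F) (hK : Monotone K)
    (hη : ∀ j : Fin ℓ, η j ∈ K j.succ ∧ η j ∉ K j.castSucc) (hh : ∀ j, h j < k)
    {α : Fin n → F} (hα : Function.Injective α) (hαK : ∀ i, α i ∈ K 0) {f : ℕ → F}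
    {Z : Finset (Fin n)} (hZ : k ≤ #Z) (hZf : ∀ i ∈ Z, evalVec α (twistedMap k t h η f) i = 0) :
    ∀ i < k, f i = 0 := by
  obtain ⟨Z', hZ'Z, hZ'⟩ := exists_subset_card_eq hZ
  let q : (K 0)[X] := ∏ i ∈ Z', (X - C ⟨α i, hαK i⟩)
  have hq : q.Monic := monic_prod_of_monic _ _ fun i _ => monic_X_sub_C _
  have hqk : q.natDegree = k := by
    rw [natDegree_prod_of_monic _ _ fun i _ => monic_X_sub_C _]
    simp [hZ']
  refine forall_lt_eq_zero_of_map_dvd_twistedMap (t := t) K hK hη hh hq hqk ?_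
  simp only [q, Polynomial.map_prod, Polynomial.map_sub, map_X, map_C]
  exact prod_dvd_of_coprime ((pairwise_coprime_X_sub_C hα).set_pairwise _) fun i hi =>
    dvd_iff_isRoot.2 (by simpa [evalVec] using hZf i (hZ'Z hi))

theorem eq_zero_of_mem_twistedCode (K : Fin (ℓ + 1) → Subfield F) (hK : Monotone K)
    (hη : ∀ j : Fin ℓ, η j ∈ K j.succ ∧ η j ∉ K j.castSucc) (hh : ∀ j, h j < k)
    {α : Fin n → F} (hα : Function.Injective α) (hαK : ∀ i, α i ∈ K 0) {c : Fin n → F}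
    (hc : c ∈ twistedCode n k ℓ α t h η) {Z : Finset (Fin n)} (hZ : k ≤ #Z)
    (hcZ : ∀ i ∈ Z, c i = 0) : c = 0 := by
  rw [twistedCode_eq_range] at hc
  obtain ⟨f, rfl⟩ := hc
  rw [LinearMap.comp_apply,
    twistedMap_eq_zero hh (forall_lt_eq_zero_of_eval_eq_zero K hK hη hh hα hαK hZ hcZ), map_zero]

theorem le_finrank_twistedCode (K : Fin (ℓ + 1) → Subfield F) (hK : Monotone K)
    (hη : ∀ j : Fin ℓ, η j ∈ K j.succ ∧ η j ∉ K j.castSucc) (hh : ∀ j, h j < k) (hkn : k ≤ n)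
    {α : Fin n → F} (hα : Function.Injective α) (hαK : ∀ i, α i ∈ K 0) :
    k ≤ finrank F (twistedCode n k ℓ α t h η) := by
  let E := (evalVec α ∘ₗ twistedMap k t h η) ∘ₗ
    Function.ExtendByZero.linearMap F (Fin.val : Fin k → ℕ)
  have hE : Function.Injective E := by
    rw [← LinearMap.ker_eq_bot, LinearMap.ker_eq_bot']
    intro g hg
    have := forall_lt_eq_zero_of_eval_eq_zero K hK hη hh hα hαK (Z := univ) (by simpa using hkn)
      fun i _ => congrFun hg i
    funext i
    simpa [Fin.val_injective.extend_apply] using this i i.2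
  calc k = finrank F (LinearMap.range E) := by
        rw [LinearMap.finrank_range_of_inj hE, finrank_fin_fun]
    _ ≤ _ := by
      rw [twistedCode_eq_range]
      exact Submodule.finrank_mono (LinearMap.range_comp_le_range _ _)

end Twisted

theorem twistedCode_MDS_general {F : Type*} [Field F] {n k ℓ : ℕ}
    (hk : 0 < k) (hkn : k < n)
    (K : Fin (ℓ + 1) → Subfield F)
    (hchain : ∀ i : Fin ℓ, K i.castSucc < K i.succ)
    (α : Fin n → F) (hα : Function.Injective α) (hαK : ∀ i, α i ∈ K 0)
    (t h : Fin ℓ → ℕ) (η : Fin ℓ → F)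
    (hh : ∀ j, h j < k)
    (hη : ∀ j : Fin ℓ, η j ∈ K j.succ ∧ η j ∉ K j.castSucc) :
    (∀ c ∈ twistedCode n k ℓ α t h η, c ≠ 0 → n - k + 1 ≤ wt c) ∧
      (∃ c ∈ twistedCode n k ℓ α t h η, c ≠ 0 ∧ wt c = n - k + 1) := by
  have hK : Monotone K := (Fin.strictMono_iff_lt_succ.2 hchain).monotone
  have hzero : ∀ c ∈ twistedCode n k ℓ α t h η, ∀ Z : Finset (Fin n), k ≤ #Z →
      (∀ i ∈ Z, c i = 0) → c = 0 := fun c hc Z hZ hcZ =>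
    eq_zero_of_mem_twistedCode K hK hη hh hα hαK hc hZ hcZ
  exact ⟨fun c hc => sub_add_one_le_wt hzero hc,
    exists_wt_eq_sub_add_one hzero hk (le_finrank_twistedCode K hK hη hh hkn.le hα hαK)⟩

/-- If the evaluation points lie in the smallest field of a chain of subfields
`F_{s₀} ⊊ F_{s₁} ⊊ ⋯ ⊊ F_{s_ℓ} = F_q`, `n ≤ s₀`, and `ηᵢ ∈ F_{sᵢ} \ F_{s_{i-1}}`,
then the twisted Reed–Solomon code is MDS: its minimum distance is `n - k + 1`. -/
theorem twistedCode_MDS {F : Type*} [Field F] [Fintype F] {n k ℓ : ℕ}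
    (hk : 0 < k) (hkn : k < n)
    (K : Fin (ℓ + 1) → Subfield F)
    (hchain : ∀ i : Fin ℓ, K i.castSucc < K i.succ)
    (htop : K (Fin.last ℓ) = ⊤)
    (α : Fin n → F) (hα : Function.Injective α) (hαK : ∀ i, α i ∈ K 0)
    (hns : n ≤ Nat.card (K 0))
    (t h : Fin ℓ → ℕ) (η : Fin ℓ → F)
    (ht1 : ∀ j, 1 ≤ t j) (ht2 : ∀ j, t j ≤ n - k) (htinj : Function.Injective t)
    (hh : ∀ j, h j < k) (hhinj : Function.Injective h)
    (hη : ∀ j : Fin ℓ, η j ∈ K j.succ ∧ η j ∉ K j.castSucc) :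
    (∀ c ∈ twistedCode n k ℓ α t h η, c ≠ 0 → n - k + 1 ≤ wt c) ∧
      (∃ c ∈ twistedCode n k ℓ α t h η, c ≠ 0 ∧ wt c = n - k + 1) :=
  twistedCode_MDS_general hk hkn K hchain α hα hαK t h η hh hη
end

section
/- If C ⊆ F_qⁿ is a linear MDS code of dimension k, then dim(C²) ≥ min{2k − 1, n}. -/
open Polynomial

/-- The Schur product code: span of all componentwise products of codewords. -/
def schurCode {F : Type*} [Field F] {n : ℕ} (C₁ C₂ : Submodule F (Fin n → F)) :
    Submodule F (Fin n → F) :=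
  Submodule.span F { z | ∃ c₁ ∈ C₁, ∃ c₂ ∈ C₂, z = fun i => c₁ i * c₂ i }

/-!
Any `k` coordinates `S` of an MDS code of dimension `k` form an information set: a codeword
vanishing on `S` has weight at most `n - k`, so restriction to `S` is injective, hence bijective.
Thus for `i ∈ S` some codeword restricts to the unit vector `eᵢ` on `S`. Given a set `I` of
`min (2k - 1) n` coordinates and `i ∈ I`, cover `I` by two `k`-sets `S`, `T` that both contain `i`;
the product of the corresponding codewords restricts to `eᵢ` on `I`. So `C²` restricted to `I`
is all of `F^I`.
-/

open Finset

theorem Finset.exists_card_eq_mem_mem_subset_union {α : Type*} [Fintype α] [DecidableEq α] {I : Finset α} {i : α} {k : ℕ} (hi : i ∈ I)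
    (hI : #I ≤ 2 * k - 1) (hk : k ≤ Fintype.card α) :
    ∃ S T : Finset α, #S = k ∧ #T = k ∧ i ∈ S ∧ i ∈ T ∧ I ⊆ S ∪ T := by
  have hk₁ : 1 ≤ k := by have := card_pos.2 ⟨i, hi⟩; omega
  have hJ : #(I.erase i) ≤ 2 * (k - 1) := by rw [card_erase_of_mem hi]; omega
  obtain ⟨A, hAJ, hA⟩ := exists_subset_card_eq (min_le_right (k - 1) #(I.erase i))
  have hB : #(I.erase i \ A) ≤ k - 1 := by rw [card_sdiff_of_subset hAJ]; omega
  have extend : ∀ B : Finset α, #B ≤ k - 1 → ∃ S, insert i B ⊆ S ∧ #S = k := fun B hB => by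
    obtain ⟨S, hBS, -, hS⟩ := exists_subsuperset_card_eq (subset_univ (insert i B))
      ((card_insert_le i B).trans (by omega : #B + 1 ≤ k)) (by simpa using hk)
    exact ⟨S, hBS, hS⟩
  obtain ⟨S, hAS, hS⟩ := extend A (by omega)
  obtain ⟨T, hBT, hT⟩ := extend _ hB
  refine ⟨S, T, hS, hT, hAS (mem_insert_self i A), hBT (mem_insert_self _ _), fun l hl => ?_⟩
  by_cases hli : l = i
  · exact mem_union_left _ (hAS (hli ▸ mem_insert_self i A))
  by_cases hlA : l ∈ A
  · exact mem_union_left _ (hAS (mem_insert_of_mem hlA))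
  · exact mem_union_right _ (hBT (mem_insert_of_mem (mem_sdiff.2 ⟨mem_erase.2 ⟨hli, hl⟩, hlA⟩)))

section Codes

variable {F : Type*} [Field F] {n : ℕ}

theorem wt_le_sub_card_of_forall_mem_eq_zero {x : Fin n → F} {S : Finset (Fin n)}
    (hx : ∀ i ∈ S, x i = 0) : wt x ≤ n - #S := by
  classical
  rw [wt, Nat.card_eq_fintype_card, Fintype.card_subtype]
  calc #{i | x i ≠ 0} ≤ #Sᶜ :=
        card_le_card fun i hi => mem_compl.2 fun hiS => (mem_filter.1 hi).2 <| hx i hiS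
    _ = n - #S := by rw [card_compl, Fintype.card_fin]

variable {C : Submodule F (Fin n → F)} {k : ℕ}

theorem eq_zero_of_forall_mem_eq_zero_of_le_card (hd : ∀ c ∈ C, c ≠ 0 → n - k + 1 ≤ wt c)
    {c : Fin n → F} (hc : c ∈ C) {S : Finset (Fin n)} (hS : k ≤ #S)
    (hcS : ∀ i ∈ S, c i = 0) : c = 0 := by
  by_contra hne
  have := (hd c hc hne).trans (wt_le_sub_card_of_forall_mem_eq_zero hcS)
  omega

theorem exists_mem_forall_apply_eq_of_card_eq (hdim : Module.finrank F C = k)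
    (hd : ∀ c ∈ C, c ≠ 0 → n - k + 1 ≤ wt c) {S : Finset (Fin n)} (hS : #S = k) (f : S → F) :
    ∃ c ∈ C, ∀ l : S, c l = f l := by
  let π : C →ₗ[F] S → F := (LinearMap.funLeft F F ((↑) : S → Fin n)).comp C.subtype
  have hπ : Function.Injective π := by
    rw [← LinearMap.ker_eq_bot, Submodule.eq_bot_iff]
    intro c hc
    exact Subtype.ext <| eq_zero_of_forall_mem_eq_zero_of_le_card hd c.2 hS.ge
      fun i hi => congrFun hc ⟨i, hi⟩
  have hrank : Module.finrank F C = Module.finrank F (S → F) := by simp [hdim, hS]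
  obtain ⟨c, hc⟩ := (LinearMap.injective_iff_surjective_of_finrank_eq_finrank hrank).1 hπ f
  exact ⟨c, c.2, fun l => congrFun hc l⟩

theorem Submodule.card_le_finrank_of_forall_exists_eqOn_single (V : Submodule F (Fin n → F))
    (I : Finset (Fin n)) (h : ∀ i ∈ I, ∃ z ∈ V, ∀ l ∈ I, z l = (Pi.single i 1 : Fin n → F) l) :
    #I ≤ Module.finrank F V := by
  let π : V →ₗ[F] I → F := (LinearMap.funLeft F F ((↑) : I → Fin n)).comp V.subtype
  have hπ : Function.Surjective π := by
    rw [← LinearMap.range_eq_top, eq_top_iff, ← (Pi.basisFun F I).span_eq, Submodule.span_le]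
    rintro _ ⟨i, rfl⟩
    obtain ⟨z, hz, hzI⟩ := h i i.2
    refine ⟨⟨z, hz⟩, funext fun l => ?_⟩
    have := hzI l l.2
    simp only [π, LinearMap.comp_apply, Submodule.subtype_apply, LinearMap.funLeft_apply] at this ⊢
    rw [this, Pi.basisFun_apply, Pi.single_apply, Pi.single_apply]
    exact if_congr Subtype.ext_iff.symm rfl rfl
  simpa using LinearMap.finrank_le_finrank_of_surjective hπ

theorem exists_mem_schurCode_forall_eq_single (hdim : Module.finrank F C = k)
    (hd : ∀ c ∈ C, c ≠ 0 → n - k + 1 ≤ wt c) (hkn : k ≤ n) {I : Finset (Fin n)}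
    (hI : #I ≤ 2 * k - 1) {i : Fin n} (hi : i ∈ I) :
    ∃ z ∈ schurCode C C, ∀ l ∈ I, z l = (Pi.single i 1 : Fin n → F) l := by
  set e : Fin n → F := Pi.single i 1
  obtain ⟨S, T, hS, hT, hiS, hiT, hIST⟩ :=
    exists_card_eq_mem_mem_subset_union hi hI (by simpa using hkn)
  obtain ⟨x, hx, hxS⟩ := exists_mem_forall_apply_eq_of_card_eq hdim hd hS fun l => e l
  obtain ⟨y, hy, hyT⟩ := exists_mem_forall_apply_eq_of_card_eq hdim hd hT fun l => e l
  refine ⟨fun l => x l * y l, Submodule.subset_span ⟨x, hx, y, hy, rfl⟩, fun l hl => ?_⟩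
  by_cases hli : l = i
  · subst hli
    simp [e, hxS ⟨l, hiS⟩, hyT ⟨l, hiT⟩]
  rcases mem_union.1 (hIST hl) with hlS | hlT
  · simp [e, hxS ⟨l, hlS⟩, hli]
  · simp [e, hyT ⟨l, hlT⟩, hli]

end Codes

theorem schurSquare_dim_lower_bound_of_MDS_general {F : Type*} [Field F]
    {n k : ℕ} (C : Submodule F (Fin n → F))
    (hdim : Module.finrank F C = k)
    (hMDS : (∀ c ∈ C, c ≠ 0 → n - k + 1 ≤ wt c) ∧
      ∃ c ∈ C, c ≠ 0 ∧ wt c = n - k + 1) :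
    min (2 * k - 1) n ≤ Module.finrank F (schurCode C C) := by
  have hkn : k ≤ n := by simpa [hdim] using C.finrank_le
  obtain ⟨I, -, hI⟩ := exists_subset_card_eq (s := (univ : Finset (Fin n)))
    (n := min (2 * k - 1) n) (by simp)
  rw [← hI]
  exact (schurCode C C).card_le_finrank_of_forall_exists_eqOn_single I fun i hi =>
    exists_mem_schurCode_forall_eq_single hdim hMDS.1 hkn (hI ▸ min_le_left _ _) hi

/-- If `C ⊆ F_qⁿ` is a linear MDS code of dimension `k`, then
`dim(C²) ≥ min{2k - 1, n}`. -/
theorem schurSquare_dim_lower_bound_of_MDS {F : Type*} [Field F] [Fintype F]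
    {n k : ℕ} (C : Submodule F (Fin n → F))
    (hdim : Module.finrank F C = k)
    (hMDS : (∀ c ∈ C, c ≠ 0 → n - k + 1 ≤ wt c) ∧
      ∃ c ∈ C, c ≠ 0 ∧ wt c = n - k + 1) :
    min (2 * k - 1) n ≤ Module.finrank F (schurCode C C) :=
  schurSquare_dim_lower_bound_of_MDS_general C hdim hMDS
end

section
/- Let C = C^{n,k}(α,t,h,η) be a twisted RS code and D = { deg(f·g) : f, g ∈ P }. Then dim(C²) ≥ |{ d ∈ D : d < n }|. -/
open Polynomial

/-! Products `f * g` of twisted polynomials evaluate into the Schur square, so every degree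
`d < n` that occurs among them is the degree of some nonzero `q` with `evalVec α q ∈ C²`.
Polynomials of pairwise distinct degrees are linearly independent, and evaluation at `n`
distinct points is injective on polynomials of degree `< n`, so these codewords are
independent in `C²`. -/

namespace Polynomial

/-- Extending a family of nonzero polynomials of distinct degrees by `X ^ i` in the missing
degrees gives a polynomial sequence, which is linearly independent. -/
theorem linearIndependent_of_natDegree_injective {R ι : Type*} [CommRing R] [IsDomain R]
    {p : ι → R[X]} (hp : ∀ i, p i ≠ 0) (hinj : Function.Injective fun i => (p i).natDegree) :
    LinearIndependent R p := by
  classical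
  let S : Sequence R :=
    { elems' := fun d => if hd : ∃ i, (p i).natDegree = d then p hd.choose else X ^ d
      degree_eq' := fun d => by
        split_ifs with hd
        · rw [degree_eq_natDegree (hp _), hd.choose_spec]
        · exact degree_X_pow d }
  have hS : ∀ i, S (p i).natDegree = p i := fun i => by
    have hd : ∃ j, (p j).natDegree = (p i).natDegree := ⟨i, rfl⟩
    change dite _ _ _ = _
    rw [dif_pos hd, hinj hd.choose_spec]
  simpa only [Function.comp_def, hS] using S.linearIndependent.comp _ hinj

end Polynomial

open Polynomial

theorem disjoint_degreeLT_ker_evalVec {F : Type*} [Field F] {n : ℕ} {α : Fin n → F}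
    (hα : Function.Injective α) : Disjoint (degreeLT F n) (LinearMap.ker (evalVec α)) := by
  rw [Submodule.disjoint_def]
  intro q hq hker
  by_contra hq0
  refine hq0 <| eq_zero_of_natDegree_lt_card_of_eval_eq_zero q hα
    (fun i => by simpa [evalVec] using congrFun (LinearMap.mem_ker.1 hker) i) ?_
  simpa [natDegree_lt_iff_degree_lt hq0] using mem_degreeLT.1 hq

theorem ncard_le_finrank_of_evalVec_mem {F : Type*} [Field F] {n : ℕ} {α : Fin n → F}
    (hα : Function.Injective α) (V : Submodule F (Fin n → F)) {S : Set ℕ}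
    (hS : ∀ d ∈ S, d < n ∧ ∃ q : F[X], q ≠ 0 ∧ q.natDegree = d ∧ evalVec α q ∈ V) :
    S.ncard ≤ Module.finrank F V := by
  choose hlt q hq0 hqdeg hqV using hS
  have : Fintype S := ((Set.finite_Iio n).subset hlt).fintype
  have hdeg : Function.Injective fun d : S => (q d d.2).natDegree := fun d e hde =>
    Subtype.ext <| by simpa only [hqdeg] using hde
  have hspan : Submodule.span F (Set.range fun d : S => q d d.2) ≤ degreeLT F n :=
    Submodule.span_le.2 <| Set.range_subset_iff.2 fun d => mem_degreeLT.2 <|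
      (natDegree_lt_iff_degree_lt (hq0 d d.2)).1 (by rw [hqdeg]; exact hlt d d.2)
  have hli : LinearIndependent F fun d : S => evalVec α (q d d.2) :=
    (linearIndependent_of_natDegree_injective (p := fun d : S => q d d.2) (fun d => hq0 d d.2)
      hdeg).map ((disjoint_degreeLT_ker_evalVec hα).mono_left hspan)
  have hliV : LinearIndependent F fun d : S => (⟨evalVec α (q d d.2), hqV d d.2⟩ : V) :=
    LinearIndependent.of_comp V.subtype hli
  rw [← Nat.card_coe_set_eq, Nat.card_eq_fintype_card]
  exact hliV.fintype_card_le_finrank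

theorem evalVec_mul {F : Type*} [Field F] {n : ℕ} (α : Fin n → F) (p q : F[X]) :
    evalVec α (p * q) = evalVec α p * evalVec α q := by
  funext i
  simp [evalVec]

theorem mul_mem_schurCode {F : Type*} [Field F] {n : ℕ} {C₁ C₂ : Submodule F (Fin n → F)}
    {c₁ c₂ : Fin n → F} (h₁ : c₁ ∈ C₁) (h₂ : c₂ ∈ C₂) : c₁ * c₂ ∈ schurCode C₁ C₂ :=
  Submodule.subset_span ⟨c₁, h₁, c₂, h₂, rfl⟩

theorem evalVec_mem_twistedCode {F : Type*} [Field F] {n k ℓ : ℕ} (α : Fin n → F)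
    {t h : Fin ℓ → ℕ} {η : Fin ℓ → F} {f : F[X]} (hf : f ∈ twistedSet k ℓ t h η) :
    evalVec α f ∈ twistedCode n k ℓ α t h η :=
  Submodule.subset_span (Set.mem_image_of_mem _ hf)

theorem schurSquare_twistedCode_lower_bound_general {F : Type*} [Field F]
    {n k ℓ : ℕ}
    (α : Fin n → F) (hα : Function.Injective α)
    (t h : Fin ℓ → ℕ) (η : Fin ℓ → F) :
    ({ d : ℕ | d < n ∧ ∃ f ∈ twistedSet k ℓ t h η, ∃ g ∈ twistedSet k ℓ t h η,
        f * g ≠ 0 ∧ (f * g).natDegree = d }).ncard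
      ≤ Module.finrank F
          (schurCode (twistedCode n k ℓ α t h η) (twistedCode n k ℓ α t h η)) := by
  refine ncard_le_finrank_of_evalVec_mem hα _ fun d ⟨hd, f, hf, g, hg, hfg, hdeg⟩ =>
    ⟨hd, f * g, hfg, hdeg, ?_⟩
  rw [evalVec_mul]
  exact mul_mem_schurCode (evalVec_mem_twistedCode α hf) (evalVec_mem_twistedCode α hg)

/-- Schur-square dimension lower bound: `dim(C²) ≥ |{d ∈ D : d < n}|`, where `D`
is the set of degrees of products of two twisted polynomials. -/
theorem schurSquare_twistedCode_lower_bound {F : Type*} [Field F] [Fintype F]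
    {n k ℓ : ℕ} (hk : 0 < k) (hkn : k < n)
    (α : Fin n → F) (hα : Function.Injective α)
    (t h : Fin ℓ → ℕ) (η : Fin ℓ → F)
    (ht1 : ∀ j, 1 ≤ t j) (ht2 : ∀ j, t j ≤ n - k) (htinj : Function.Injective t)
    (hh : ∀ j, h j < k) (hhinj : Function.Injective h)
    (hη : ∀ j, η j ≠ 0) :
    ({ d : ℕ | d < n ∧ ∃ f ∈ twistedSet k ℓ t h η, ∃ g ∈ twistedSet k ℓ t h η,
        f * g ≠ 0 ∧ (f * g).natDegree = d }).ncard
      ≤ Module.finrank F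
          (schurCode (twistedCode n k ℓ α t h η) (twistedCode n k ℓ α t h η)) :=
  schurSquare_twistedCode_lower_bound_general α hα t h η
end

section
/- Let C be an [n,k] linear code with k < n/2 and dim(C²) = 2k − 1 + δ with δ > 0. If D is a GRS code with C ⊆ D, then dim(D) ≥ k + δ/2. -/
/-!
Write the GRS code `D` as the image of the polynomials of degree `< K` under the twisted
evaluation `f ↦ (vᵢ f(αᵢ))ᵢ`. Products of two such codewords are twisted evaluations, with
multipliers `vᵢ²`, of polynomials of degree `< 2K - 1`, so `dim D² ≤ 2K - 1 = 2 dim D - 1`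
when `K ≤ n`; when `K ≥ n`, Lagrange interpolation makes `D` the whole space and
`dim D² ≤ n ≤ 2 dim D - 1`. Since `C ⊆ D` gives `C² ⊆ D²`, we get `2k - 1 + δ ≤ 2 dim D - 1`.
-/

open Polynomial

/-- `D` is a generalised Reed–Solomon code of dimension parameter `K`. -/
def IsGRS {F : Type*} [Field F] {n : ℕ} (D : Submodule F (Fin n → F)) (K : ℕ) : Prop :=
  ∃ (α v : Fin n → F), Function.Injective α ∧ (∀ i, v i ≠ 0) ∧
    (↑D : Set (Fin n → F)) =
      (fun f => fun i => v i * Polynomial.eval (α i) f) '' ↑(Polynomial.degreeLT F K)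

section

variable {F : Type*} [Field F] {n : ℕ}

theorem schurCode_mono {C₁ C₂ D₁ D₂ : Submodule F (Fin n → F)} (h₁ : C₁ ≤ D₁) (h₂ : C₂ ≤ D₂) :
    schurCode C₁ C₂ ≤ schurCode D₁ D₂ :=
  Submodule.span_mono fun _ ⟨c₁, hc₁, c₂, hc₂, hz⟩ => ⟨c₁, h₁ hc₁, c₂, h₂ hc₂, hz⟩

theorem Polynomial.mul_mem_degreeLT {K L : ℕ} {f g : F[X]} (hf : f ∈ degreeLT F K)
    (hg : g ∈ degreeLT F L) : f * g ∈ degreeLT F (K + L - 1) := by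
  rcases eq_or_ne f 0 with rfl | hf0
  · simp
  rcases eq_or_ne g 0 with rfl | hg0
  · simp
  rw [mem_degreeLT, ← natDegree_lt_iff_degree_lt (mul_ne_zero hf0 hg0), natDegree_mul hf0 hg0]
  rw [mem_degreeLT, ← natDegree_lt_iff_degree_lt hf0] at hf
  rw [mem_degreeLT, ← natDegree_lt_iff_degree_lt hg0] at hg
  omega

theorem Polynomial.finrank_degreeLT (K : ℕ) : Module.finrank F (degreeLT F K) = K := by
  rw [(degreeLTEquiv F K).finrank_eq, Module.finrank_fin_fun]

noncomputable def grsEval (α v : Fin n → F) : F[X] →ₗ[F] (Fin n → F) :=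
  LinearMap.pi fun i => v i • leval (α i)

@[simp]
theorem grsEval_apply (α v : Fin n → F) (f : F[X]) (i : Fin n) :
    grsEval α v f i = v i * f.eval (α i) :=
  rfl

theorem IsGRS.exists_eq_map {D : Submodule F (Fin n → F)} {K : ℕ} (hD : IsGRS D K) :
    ∃ α v : Fin n → F, Function.Injective α ∧ (∀ i, v i ≠ 0) ∧
      D = (degreeLT F K).map (grsEval α v) := by
  obtain ⟨α, v, hα, hv, hDα⟩ := hD
  exact ⟨α, v, hα, hv, SetLike.ext' hDα⟩

theorem schurCode_map_grsEval_le (α v w : Fin n → F) (K L : ℕ) :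
    schurCode ((degreeLT F K).map (grsEval α v)) ((degreeLT F L).map (grsEval α w)) ≤
      (degreeLT F (K + L - 1)).map (grsEval α (v * w)) := by
  refine Submodule.span_le.2 ?_
  rintro _ ⟨_, ⟨f, hf, rfl⟩, _, ⟨g, hg, rfl⟩, rfl⟩
  refine ⟨f * g, mul_mem_degreeLT hf hg, funext fun i => ?_⟩
  simp only [grsEval_apply, eval_mul, Pi.mul_apply]
  ring

section

variable {α v : Fin n → F} (hα : Function.Injective α) (hv : ∀ i, v i ≠ 0)
include hα hv

theorem finrank_map_grsEval {K : ℕ} (hKn : K ≤ n) :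
    Module.finrank F ((degreeLT F K).map (grsEval α v)) = K := by
  have hinj : Function.Injective (grsEval α v ∘ₗ (degreeLT F K).subtype) := by
    rw [← LinearMap.ker_eq_bot, Submodule.eq_bot_iff]
    rintro ⟨f, hf⟩ hker
    have heval : ∀ i ∈ Finset.univ, f.eval (α i) = 0 := fun i _ =>
      (mul_eq_zero.1 (congrFun hker i)).resolve_left (hv i)
    have hdeg : f.degree < (Finset.univ : Finset (Fin n)).card :=
      (mem_degreeLT.1 hf).trans_le (by simpa using hKn)
    exact Subtype.ext (eq_zero_of_degree_lt_of_eval_index_eq_zero _ hα.injOn hdeg heval)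
  rw [← Submodule.range_subtype (degreeLT F K), ← LinearMap.range_comp,
    LinearMap.finrank_range_of_inj hinj, finrank_degreeLT]

theorem map_grsEval_eq_top {K : ℕ} (hnK : n ≤ K) :
    (degreeLT F K).map (grsEval α v) = ⊤ := by
  refine eq_top_iff.2 fun y _ => ⟨Lagrange.interpolate Finset.univ α (fun i => y i / v i), ?_, ?_⟩
  · rw [SetLike.mem_coe, mem_degreeLT]
    refine (Lagrange.degree_interpolate_lt _ hα.injOn).trans_le ?_
    simpa using hnK
  · funext i
    rw [grsEval_apply, Lagrange.eval_interpolate_at_node _ hα.injOn (Finset.mem_univ i),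
      mul_div_cancel₀ _ (hv i)]

end

theorem IsGRS.finrank_schurCode_self_le {D : Submodule F (Fin n → F)} {K : ℕ} (hD : IsGRS D K) :
    Module.finrank F (schurCode D D) ≤ 2 * Module.finrank F D - 1 := by
  obtain ⟨α, v, hα, hv, rfl⟩ := hD.exists_eq_map
  rcases le_total K n with hKn | hnK
  · rw [finrank_map_grsEval hα hv hKn]
    calc Module.finrank F (schurCode _ _)
        ≤ Module.finrank F ((degreeLT F (K + K - 1)).map (grsEval α (v * v))) :=
          Submodule.finrank_mono (schurCode_map_grsEval_le α v v K K)
      _ ≤ K + K - 1 := (Submodule.finrank_map_le _ _).trans_eq (finrank_degreeLT _)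
      _ = 2 * K - 1 := by omega
  · rw [map_grsEval_eq_top hα hv hnK, finrank_top, Module.finrank_fin_fun]
    have hle : Module.finrank F (schurCode (⊤ : Submodule F (Fin n → F)) ⊤) ≤ n :=
      (Submodule.finrank_le _).trans_eq (Module.finrank_fin_fun F)
    omega

end

theorem dim_GRS_outer_lower_bound_general {F : Type*} [Field F] {n k δ : ℕ}
    (C D : Submodule F (Fin n → F))
    (hC2 : Module.finrank F (schurCode C C) = 2 * k - 1 + δ)
    (hGRS : ∃ K : ℕ, IsGRS D K) (hCD : C ≤ D) :
    (k : ℚ) + (δ : ℚ) / 2 ≤ (Module.finrank F D : ℚ) := by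
  obtain ⟨K, hD⟩ := hGRS
  have hsq : 2 * k - 1 + δ ≤ 2 * Module.finrank F D - 1 :=
    hC2 ▸ (Submodule.finrank_mono (schurCode_mono hCD hCD)).trans hD.finrank_schurCode_self_le
  have hdouble : ((2 * k + δ : ℕ) : ℚ) ≤ ((2 * Module.finrank F D : ℕ) : ℚ) := by
    exact_mod_cast (by omega : 2 * k + δ ≤ 2 * Module.finrank F D)
  push_cast at hdouble
  linarith

/-- If `C` is an `[n,k]` code with `k < n/2` and `dim(C²) = 2k - 1 + δ`, `δ > 0`,
then any GRS code `D ⊇ C` has `dim D ≥ k + δ/2`. -/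
theorem dim_GRS_outer_lower_bound {F : Type*} [Field F] [Fintype F] {n k δ : ℕ}
    (C D : Submodule F (Fin n → F))
    (hk : Module.finrank F C = k) (hkn : 2 * k < n) (hδ : 0 < δ)
    (hC2 : Module.finrank F (schurCode C C) = 2 * k - 1 + δ)
    (hGRS : ∃ K : ℕ, IsGRS D K) (hCD : C ≤ D) :
    (k : ℚ) + (δ : ℚ) / 2 ≤ (Module.finrank F D : ℚ) :=
  dim_GRS_outer_lower_bound_general C D hC2 hGRS hCD
end
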